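/- For every positive integer m, all natural numbers n, r, and all complex numbers x, ξ, X, Ω, y, Y: _mL_n(x,ξ|q) · _mL_r(X,Ω|q) = Σ_{k=0}^{n} Σ_{p=0}^{r} [n choose k]_q [r choose p]_q (ξ ⊖_q y)^k (Ω ⊖_q Y)^p · _mL_{n-k}(x,y|q) · _mL_{r-p}(X,Y|q). -/
import Mathlib


/-- The q-analogue of a natural number: [n]_q = Σ_{k=1}^n q^{k-1}. -/
noncomputable def qnat (q : ℝ) (n : ℕ) : ℝ := ∑ k ∈ Finset.range n, q ^ k

/-- The q-factorial [n]_q! = Π_{k=1}^n [k]_q, with [0]_q! = 1. -/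
noncomputable def qfact (q : ℝ) (n : ℕ) : ℝ := ∏ k ∈ Finset.range n, qnat q (k + 1)

/-- The Gaussian q-binomial coefficient [n choose k]_q. -/
noncomputable def qbinom (q : ℝ) (n k : ℕ) : ℝ := qfact q n / (qfact q k * qfact q (n - k))

/-- JHC q-subtraction power (x ⊖_q y)^n. -/
noncomputable def qsubPow (q : ℝ) (x y : ℂ) (n : ℕ) : ℂ :=
  ∑ k ∈ Finset.range (n + 1),
    (qbinom q n k : ℂ) * (q : ℂ) ^ (k * (k - 1) / 2) * x ^ (n - k) * (-y) ^ k

/-- JHC q-addition power (x ⊕_q y)^n. -/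
noncomputable def qaddPow (q : ℝ) (x y : ℂ) (n : ℕ) : ℂ :=
  ∑ k ∈ Finset.range (n + 1),
    (qbinom q n k : ℂ) * (q : ℂ) ^ (k * (k - 1) / 2) * x ^ (n - k) * y ^ k

/-- The q-deformed 2D Laguerre polynomial _mL_n(x,y|q). -/
noncomputable def qLag (q : ℝ) (m : ℕ) (x y : ℂ) (n : ℕ) : ℂ :=
  (qfact q n : ℂ) * ∑ k ∈ Finset.range (n / m + 1),
    (q : ℂ) ^ (m * (k * (k - 1) / 2)) * x ^ k * y ^ (n - m * k) /
      ((qfact (q ^ m) k : ℂ) ^ 2 * (qfact q (n - m * k) : ℂ))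

/-- The q-deformed Laguerre-Gould-Hopper polynomial _LH_n^{(m,s)}(x,y,z|q). -/
noncomputable def qLGH (q : ℝ) (m s : ℕ) (x y z : ℂ) (n : ℕ) : ℂ :=
  (qfact q n : ℂ) * ∑ k ∈ Finset.range (n / s + 1),
    (q : ℂ) ^ (s * (k * (k - 1) / 2)) * z ^ k * qLag q m x y (n - s * k) /
      ((qfact (q ^ s) k : ℂ) * (qfact q (n - s * k) : ℂ))

/-- The two-variable q-Gould-Hopper kernel G_n^s(u,v). -/
noncomputable def qGH (q : ℝ) (s : ℕ) (u v : ℂ) (n : ℕ) : ℂ :=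
  (qfact q n : ℂ) * ∑ k ∈ Finset.range (n / s + 1),
    (q : ℂ) ^ (s * (k * (k - 1) / 2)) * u ^ (n - s * k) * v ^ k /
      ((qfact q (n - s * k) : ℂ) * (qfact (q ^ s) k : ℂ))

/-- The kernel G_n^s(ξ ⊖_q y, ζ ⊖_q z), with monomial powers replaced by
JHC q-subtraction powers. -/
noncomputable def qGHsub (q : ℝ) (s : ℕ) (ξ y ζ z : ℂ) (n : ℕ) : ℂ :=
  (qfact q n : ℂ) * ∑ k ∈ Finset.range (n / s + 1),
    (q : ℂ) ^ (s * (k * (k - 1) / 2)) * qsubPow q ξ y (n - s * k) * qsubPow q ζ z k /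
      ((qfact q (n - s * k) : ℂ) * (qfact (q ^ s) k : ℂ))

-- auxiliary lemmas

lemma qnat_pos {q : ℝ} (hq : 0 < q) (n : ℕ) : 0 < qnat q (n + 1) :=
  Finset.sum_pos (fun i _ => pow_pos hq i) (by simp)

lemma qfact_pos {q : ℝ} (hq : 0 < q) (n : ℕ) : 0 < qfact q n :=
  Finset.prod_pos fun k _ => qnat_pos hq k

lemma qfact_ne {q : ℝ} (hq : 0 < q) (n : ℕ) : (qfact q n : ℝ) ≠ 0 :=
  ne_of_gt (qfact_pos hq n)

lemma qfact_neC {q : ℝ} (hq : 0 < q) (n : ℕ) : ((qfact q n : ℝ) : ℂ) ≠ 0 := by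
  exact_mod_cast qfact_ne hq n

lemma qfact_succ (q : ℝ) (n : ℕ) : qfact q (n + 1) = qfact q n * qnat q (n + 1) :=
  Finset.prod_range_succ _ _

lemma qnat_add {q : ℝ} (hq : q ≠ 1) (a b : ℕ) :
    qnat q (a + b) = qnat q a + q ^ a * qnat q b := by
  have h : q - 1 ≠ 0 := sub_ne_zero.mpr hq
  simp only [qnat, geom_sum_eq hq]
  field_simp
  ring

lemma qbinom_zero {q : ℝ} (hq : 0 < q) (n : ℕ) : qbinom q n 0 = 1 := by
  unfold qbinom
  simp only [Nat.sub_zero]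
  rw [show qfact q 0 = 1 from Finset.prod_range_zero _, one_mul,
    div_self (qfact_ne hq n)]

lemma qbinom_self {q : ℝ} (hq : 0 < q) (n : ℕ) : qbinom q n n = 1 := by
  unfold qbinom
  simp only [Nat.sub_self]
  rw [show qfact q 0 = 1 from Finset.prod_range_zero _, mul_one,
    div_self (qfact_ne hq n)]

lemma qbinom_pascal {q : ℝ} (hq0 : 0 < q) (hq1 : q < 1) {N t : ℕ} (h : t < N) :
    qbinom q (N + 1) (t + 1) = qbinom q N (t + 1) + q ^ (N - t) * qbinom q N t := by
  have h1 : N + 1 - (t + 1) = N - t := by omega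
  have h2 : N - (t + 1) = N - t - 1 := by omega
  unfold qbinom
  rw [h1, h2]
  have e1 : qfact q (N + 1) = qfact q N * qnat q (N + 1) := qfact_succ q N
  have e2 : qfact q (t + 1) = qfact q t * qnat q (t + 1) := qfact_succ q t
  have e3 : qfact q (N - t) = qfact q (N - t - 1) * qnat q (N - t) := by
    have hh : N - t = (N - t - 1) + 1 := by omega
    rw [hh]; exact qfact_succ q _
  have e4 : qnat q (N + 1) = qnat q (N - t) + q ^ (N - t) * qnat q (t + 1) := by
    have hh : N + 1 = (N - t) + (t + 1) := by omega
    rw [hh]; exact qnat_add (ne_of_lt hq1) _ _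
  have n1 := qfact_ne hq0 N
  have n2 := qfact_ne hq0 t
  have n3 := qfact_ne hq0 (N - t - 1)
  have n4 := ne_of_gt (qnat_pos hq0 t)
  have n5 : qnat q (N - t) ≠ 0 := by
    have hh : N - t = (N - t - 1) + 1 := by omega
    rw [hh]; exact ne_of_gt (qnat_pos hq0 _)
  rw [e1, e2, e3, e4]
  field_simp

lemma qsub_poly {q : ℝ} (hq0 : 0 < q) (hq1 : q < 1) (z : ℂ) (N : ℕ) :
    ∑ t ∈ Finset.range (N + 1), (qbinom q N t : ℂ) * (q : ℂ) ^ (t * (t - 1) / 2) * z ^ t =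
      ∏ i ∈ Finset.range N, (1 + (q : ℂ) ^ i * z) := by
  induction N with
  | zero => simp [qbinom_zero hq0]
  | succ N ih =>
    rw [Finset.prod_range_succ, ← ih, mul_add, mul_one, Finset.sum_mul]
    have hL : ∑ t ∈ Finset.range (N + 1 + 1),
        (qbinom q (N + 1) t : ℂ) * (q : ℂ) ^ (t * (t - 1) / 2) * z ^ t =
        (∑ t ∈ Finset.range N,
          (qbinom q (N + 1) (t + 1) : ℂ) * (q : ℂ) ^ ((t + 1) * t / 2) * z ^ (t + 1))
        + (qbinom q (N + 1) (N + 1) : ℂ) * (q : ℂ) ^ ((N + 1) * N / 2) * z ^ (N + 1)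
        + (qbinom q (N + 1) 0 : ℂ) * (q : ℂ) ^ (0 * (0 - 1) / 2) * z ^ 0 := by
      rw [Finset.sum_range_succ' _ (N + 1), Finset.sum_range_succ]
      simp only [Nat.add_sub_cancel]
    have hR1 : ∑ t ∈ Finset.range (N + 1),
        (qbinom q N t : ℂ) * (q : ℂ) ^ (t * (t - 1) / 2) * z ^ t =
        (∑ t ∈ Finset.range N,
          (qbinom q N (t + 1) : ℂ) * (q : ℂ) ^ ((t + 1) * t / 2) * z ^ (t + 1))
        + (qbinom q N 0 : ℂ) * (q : ℂ) ^ (0 * (0 - 1) / 2) * z ^ 0 := by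
      rw [Finset.sum_range_succ' _ N]
      simp only [Nat.add_sub_cancel]
    have hR2 : ∑ t ∈ Finset.range (N + 1),
        (qbinom q N t : ℂ) * (q : ℂ) ^ (t * (t - 1) / 2) * z ^ t * ((q : ℂ) ^ N * z) =
        (∑ t ∈ Finset.range N,
          (qbinom q N t : ℂ) * (q : ℂ) ^ (t * (t - 1) / 2) * z ^ t * ((q : ℂ) ^ N * z))
        + (qbinom q N N : ℂ) * (q : ℂ) ^ (N * (N - 1) / 2) * z ^ N * ((q : ℂ) ^ N * z) :=
      Finset.sum_range_succ _ _
    rw [hL, hR1, hR2]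
    have hmain : ∑ t ∈ Finset.range N,
        (qbinom q (N + 1) (t + 1) : ℂ) * (q : ℂ) ^ ((t + 1) * t / 2) * z ^ (t + 1)
        = (∑ t ∈ Finset.range N,
            (qbinom q N (t + 1) : ℂ) * (q : ℂ) ^ ((t + 1) * t / 2) * z ^ (t + 1))
          + ∑ t ∈ Finset.range N,
            (qbinom q N t : ℂ) * (q : ℂ) ^ (t * (t - 1) / 2) * z ^ t * ((q : ℂ) ^ N * z) := by
      rw [← Finset.sum_add_distrib]
      apply Finset.sum_congr rfl
      intro t ht
      have ht' : t < N := Finset.mem_range.mp ht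
      have hp : ((qbinom q (N + 1) (t + 1) : ℝ) : ℂ)
          = ((qbinom q N (t + 1) : ℝ) : ℂ) + (q : ℂ) ^ (N - t) * (qbinom q N t : ℝ) := by
        rw [qbinom_pascal hq0 hq1 ht']
        push_cast
        ring
      rw [hp]
      have hexp : (q : ℂ) ^ (N - t) * (q : ℂ) ^ ((t + 1) * t / 2)
          = (q : ℂ) ^ (t * (t - 1) / 2) * (q : ℂ) ^ N := by
        rw [← pow_add, ← pow_add]
        congr 1
        have h2t : (t + 1) * t = t * (t - 1) + 2 * t := by
          cases t with
          | zero => rfl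
          | succ s => simp [Nat.succ_sub_one]; ring
        omega
      have hz : z ^ (t + 1) = z ^ t * z := pow_succ z t
      rw [hz]
      linear_combination ((qbinom q N t : ℝ) : ℂ) * z ^ t * z * hexp
    rw [hmain]
    have hb0 : qbinom q (N + 1) 0 = qbinom q N 0 := by
      rw [qbinom_zero hq0, qbinom_zero hq0]
    have hbtop : ((qbinom q (N + 1) (N + 1) : ℝ) : ℂ) * (q : ℂ) ^ ((N + 1) * N / 2) * z ^ (N + 1)
        = ((qbinom q N N : ℝ) : ℂ) * (q : ℂ) ^ (N * (N - 1) / 2) * z ^ N * ((q : ℂ) ^ N * z) := by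
      rw [qbinom_self hq0, qbinom_self hq0]
      have he : (q : ℂ) ^ ((N + 1) * N / 2) = (q : ℂ) ^ (N * (N - 1) / 2) * (q : ℂ) ^ N := by
        rw [← pow_add]
        congr 1
        have h2t : (N + 1) * N = N * (N - 1) + 2 * N := by
          cases N with
          | zero => rfl
          | succ s => simp [Nat.succ_sub_one]; ring
        omega
      rw [he, pow_succ]
      push_cast
      ring
    rw [hb0, hbtop]
    ring

lemma gauss {q : ℝ} (hq0 : 0 < q) (hq1 : q < 1) {N : ℕ} (hN : 0 < N) :
    ∑ t ∈ Finset.range (N + 1),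
      (qbinom q N t : ℂ) * (q : ℂ) ^ (t * (t - 1) / 2) * (-1 : ℂ) ^ t = 0 := by
  rw [qsub_poly hq0 hq1 (-1 : ℂ) N]
  apply Finset.prod_eq_zero (Finset.mem_range.mpr hN)
  simp

lemma qbinom_tri {q : ℝ} (hq0 : 0 < q) (N i t : ℕ) :
    qbinom q N (t + i) * qbinom q (t + i) t = qbinom q N i * qbinom q (N - i) t := by
  unfold qbinom
  rw [show N - (t + i) = N - i - t by omega, show t + i - t = i by omega,
    show N - i - t = N - i - t from rfl]
  have n1 := qfact_ne hq0 N
  have n2 := qfact_ne hq0 i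
  have n3 := qfact_ne hq0 t
  have n4 := qfact_ne hq0 (N - i)
  have n5 := qfact_ne hq0 (N - i - t)
  have n6 := qfact_ne hq0 (t + i)
  field_simp

lemma expand_pow {q : ℝ} (hq0 : 0 < q) (hq1 : q < 1) (x y : ℂ) (N : ℕ) :
    x ^ N = ∑ k ∈ Finset.range (N + 1),
      (qbinom q N k : ℂ) * qsubPow q x y k * y ^ (N - k) := by
  unfold qsubPow
  -- expand to double sum
  have step0 : ∀ k, (qbinom q N k : ℂ) *
      (∑ t ∈ Finset.range (k + 1),
        (qbinom q k t : ℂ) * (q : ℂ) ^ (t * (t - 1) / 2) * x ^ (k - t) * (-y) ^ t) * y ^ (N - k)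
      = ∑ t ∈ Finset.range (k + 1),
        (qbinom q N k : ℂ) * (qbinom q k t : ℂ) * (q : ℂ) ^ (t * (t - 1) / 2)
          * x ^ (k - t) * (-y) ^ t * y ^ (N - k) := by
    intro k
    rw [Finset.mul_sum, Finset.sum_mul]
    apply Finset.sum_congr rfl
    intro t _
    ring
  simp only [step0]
  have step1 : (∑ k ∈ Finset.range (N + 1), ∑ t ∈ Finset.range (k + 1),
        (qbinom q N k : ℂ) * (qbinom q k t : ℂ) * (q : ℂ) ^ (t * (t - 1) / 2)
          * x ^ (k - t) * (-y) ^ t * y ^ (N - k))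
      = ∑ t ∈ Finset.range (N + 1), ∑ k ∈ Finset.Ico t (N + 1),
        (qbinom q N k : ℂ) * (qbinom q k t : ℂ) * (q : ℂ) ^ (t * (t - 1) / 2)
          * x ^ (k - t) * (-y) ^ t * y ^ (N - k) := by
    apply Finset.sum_comm'
    intro k t
    simp only [Finset.mem_range, Finset.mem_Ico]
    omega
  rw [step1]
  have step2 : ∀ t ∈ Finset.range (N + 1),
      (∑ k ∈ Finset.Ico t (N + 1),
        (qbinom q N k : ℂ) * (qbinom q k t : ℂ) * (q : ℂ) ^ (t * (t - 1) / 2)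
          * x ^ (k - t) * (-y) ^ t * y ^ (N - k))
      = ∑ i ∈ Finset.range (N + 1 - t),
        (qbinom q N (t + i) : ℂ) * (qbinom q (t + i) t : ℂ) * (q : ℂ) ^ (t * (t - 1) / 2)
          * x ^ (t + i - t) * (-y) ^ t * y ^ (N - (t + i)) := by
    intro t _
    exact Finset.sum_Ico_eq_sum_range _ _ _
  rw [Finset.sum_congr rfl step2]
  have step3 : (∑ t ∈ Finset.range (N + 1), ∑ i ∈ Finset.range (N + 1 - t),
        (qbinom q N (t + i) : ℂ) * (qbinom q (t + i) t : ℂ) * (q : ℂ) ^ (t * (t - 1) / 2)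
          * x ^ (t + i - t) * (-y) ^ t * y ^ (N - (t + i)))
      = ∑ i ∈ Finset.range (N + 1), ∑ t ∈ Finset.range (N + 1 - i),
        (qbinom q N (t + i) : ℂ) * (qbinom q (t + i) t : ℂ) * (q : ℂ) ^ (t * (t - 1) / 2)
          * x ^ (t + i - t) * (-y) ^ t * y ^ (N - (t + i)) := by
    apply Finset.sum_comm'
    intro t i
    simp only [Finset.mem_range]
    omega
  rw [step3]
  -- now evaluate each inner sum
  have inner : ∀ i ∈ Finset.range (N + 1),
      (∑ t ∈ Finset.range (N + 1 - i),
        (qbinom q N (t + i) : ℂ) * (qbinom q (t + i) t : ℂ) * (q : ℂ) ^ (t * (t - 1) / 2)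
          * x ^ (t + i - t) * (-y) ^ t * y ^ (N - (t + i)))
      = (qbinom q N i : ℂ) * x ^ i * y ^ (N - i) *
          ∑ t ∈ Finset.range (N - i + 1),
            (qbinom q (N - i) t : ℂ) * (q : ℂ) ^ (t * (t - 1) / 2) * (-1 : ℂ) ^ t := by
    intro i hi
    have hi' : i ≤ N := by
      have := Finset.mem_range.mp hi; omega
    rw [show N + 1 - i = N - i + 1 by omega, Finset.mul_sum]
    apply Finset.sum_congr rfl
    intro t ht
    have ht' : t ≤ N - i := by
      have := Finset.mem_range.mp ht; omega
    have htri : ((qbinom q N (t + i) : ℝ) : ℂ) * ((qbinom q (t + i) t : ℝ) : ℂ)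
        = ((qbinom q N i : ℝ) : ℂ) * ((qbinom q (N - i) t : ℝ) : ℂ) := by
      rw [← Complex.ofReal_mul, qbinom_tri hq0 N i t, Complex.ofReal_mul]
    have hxp : t + i - t = i := by omega
    have hyp : (-y) ^ t * y ^ (N - (t + i)) = (-1 : ℂ) ^ t * y ^ (N - i) := by
      rw [neg_pow, mul_assoc, ← pow_add, show t + (N - (t + i)) = N - i by omega]
    rw [hxp]
    calc (qbinom q N (t + i) : ℂ) * (qbinom q (t + i) t : ℂ) * (q : ℂ) ^ (t * (t - 1) / 2)
          * x ^ i * (-y) ^ t * y ^ (N - (t + i))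
        = ((qbinom q N (t + i) : ℂ) * (qbinom q (t + i) t : ℂ)) * (q : ℂ) ^ (t * (t - 1) / 2)
          * x ^ i * ((-y) ^ t * y ^ (N - (t + i))) := by ring
      _ = ((qbinom q N i : ℂ) * (qbinom q (N - i) t : ℂ)) * (q : ℂ) ^ (t * (t - 1) / 2)
          * x ^ i * ((-1 : ℂ) ^ t * y ^ (N - i)) := by rw [htri, hyp]
      _ = (qbinom q N i : ℂ) * x ^ i * y ^ (N - i) *
          ((qbinom q (N - i) t : ℂ) * (q : ℂ) ^ (t * (t - 1) / 2) * (-1 : ℂ) ^ t) := by ring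
  rw [Finset.sum_congr rfl inner, Finset.sum_range_succ]
  have hzero : ∀ i ∈ Finset.range N,
      (qbinom q N i : ℂ) * x ^ i * y ^ (N - i) *
        (∑ t ∈ Finset.range (N - i + 1),
          (qbinom q (N - i) t : ℂ) * (q : ℂ) ^ (t * (t - 1) / 2) * (-1 : ℂ) ^ t) = 0 := by
    intro i hi
    have hi' : i < N := Finset.mem_range.mp hi
    rw [gauss hq0 hq1 (by omega : 0 < N - i), mul_zero]
  rw [Finset.sum_eq_zero hzero, zero_add]
  rw [show N - N = 0 by omega]
  simp [qbinom_self hq0, qbinom_zero hq0]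

lemma expand_qLag {q : ℝ} (hq0 : 0 < q) (hq1 : q < 1) {m : ℕ} (hm : 0 < m)
    (n : ℕ) (x ξ y : ℂ) :
    qLag q m x ξ n = ∑ k ∈ Finset.range (n + 1),
      (qbinom q n k : ℂ) * qsubPow q ξ y k * qLag q m x y (n - k) := by
  have hqm : 0 < q ^ m := pow_pos hq0 m
  -- The common double-sum term
  set T : ℕ → ℕ → ℂ := fun j k =>
    (qfact q n : ℂ) * (q : ℂ) ^ (m * (j * (j - 1) / 2)) * x ^ j * qsubPow q ξ y k
      * y ^ (n - m * j - k) /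
      (((qfact (q ^ m) j : ℝ) : ℂ) ^ 2 * ((qfact q k : ℝ) : ℂ)
        * ((qfact q (n - m * j - k) : ℝ) : ℂ)) with hT
  have hL : qLag q m x ξ n
      = ∑ j ∈ Finset.range (n / m + 1), ∑ k ∈ Finset.range (n - m * j + 1), T j k := by
    unfold qLag
    rw [Finset.mul_sum]
    apply Finset.sum_congr rfl
    intro j hj
    rw [expand_pow hq0 hq1 ξ y (n - m * j)]
    rw [Finset.mul_sum, Finset.sum_div, Finset.mul_sum]
    apply Finset.sum_congr rfl
    intro k hk
    rw [hT]
    simp only []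
    unfold qbinom
    have n1 := qfact_neC hq0 (n - m * j)
    have n2 := qfact_neC hq0 k
    have n3 := qfact_neC hq0 (n - m * j - k)
    have n4 : ((qfact (q ^ m) j : ℝ) : ℂ) ≠ 0 := qfact_neC hqm j
    push_cast
    field_simp
  have hR : (∑ k ∈ Finset.range (n + 1),
      (qbinom q n k : ℂ) * qsubPow q ξ y k * qLag q m x y (n - k))
      = ∑ k ∈ Finset.range (n + 1), ∑ j ∈ Finset.range ((n - k) / m + 1), T j k := by
    apply Finset.sum_congr rfl
    intro k hk
    unfold qLag
    rw [Finset.mul_sum, Finset.mul_sum]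
    apply Finset.sum_congr rfl
    intro j hj
    rw [hT]
    simp only []
    unfold qbinom
    rw [show n - k - m * j = n - m * j - k from Nat.sub_right_comm n k (m * j)]
    have n1 := qfact_neC hq0 (n - k)
    have n2 := qfact_neC hq0 k
    have n3 := qfact_neC hq0 (n - m * j - k)
    have n4 : ((qfact (q ^ m) j : ℝ) : ℂ) ≠ 0 := qfact_neC hqm j
    push_cast
    field_simp
  rw [hL, hR]
  apply Finset.sum_comm'
  intro j k
  simp only [Finset.mem_range, Nat.lt_succ_iff]
  rw [Nat.le_div_iff_mul_le hm, Nat.le_div_iff_mul_le hm]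
  rw [mul_comm j m]
  generalize m * j = a
  omega

theorem qLaguerre_product_formula (q : ℝ) (hq0 : 0 < q) (hq1 : q < 1)
    (m : ℕ) (hm : 0 < m) (n r : ℕ) (x ξ X Ω y Y : ℂ) :
    qLag q m x ξ n * qLag q m X Ω r =
      ∑ k ∈ Finset.range (n + 1), ∑ p ∈ Finset.range (r + 1),
        (qbinom q n k : ℂ) * (qbinom q r p : ℂ) *
          qsubPow q ξ y k * qsubPow q Ω Y p *
          qLag q m x y (n - k) * qLag q m X Y (r - p) := by
  rw [expand_qLag hq0 hq1 hm n x ξ y, expand_qLag hq0 hq1 hm r X Ω Y,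
    Finset.sum_mul_sum]
  apply Finset.sum_congr rfl
  intro k _
  apply Finset.sum_congr rfl
  intro p _
  ring
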